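/- (Bounds on the finite-horizon rate function for K = 2.) Let K = 2 with C^1 = C^2 = 1, ℛ_s = {r ∈ ℝ₊² : r¹ + r² ≤ 1}, and H^wc a quasi-continuous work-conserving max-weight scheduler for ℛ_s. Let Λ : ℝ₊ → [0,∞) be convex, and for b ∈ ℝ₊² and t ∈ ℕ define I_t(b) := min_{1 ≤ u ≤ t} inf_{x ∈ 𝔸(u,b)} Σ_{i=1}^u Σ_{k=1}^2 Λ(x_i^k) (with inf over the empty set equal to +∞), where 𝔸(1,b) := {b}. Then: (i) I_t(b) ≥ min_{1 ≤ u ≤ t} u·Σ_{k=1}^2 Λ( (Proj_{𝕏(u,b)}(0))^k / u ), where 𝕏(u,b) := {b + v : v ∈ ℝ₊², v¹ + v² = u−1} and Proj_{𝕏(u,b)}(0) is the Euclidean projection of the origin onto the closed convex set 𝕏(u,b); and (ii) if b ∉ [0,1)², then I_t(b) ≤ min_{1 ≤ u ≤ t} u·Σ_{k=1}^2 Λ( (b^k + (u−1)h^k)/u ), where h := (1,0) if b¹ ≥ b² and h := (0,1) otherwise. -/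

import Mathlib

open Filter Topology MeasureTheory
open scoped ENNReal NNReal

/-- The nonnegative orthant ℝ₊^K as a metric subspace of `Fin K → ℝ`
(the latter carrying the square/sup product metric, as in the paper). -/
abbrev Orth (K : ℕ) := {w : Fin K → ℝ // ∀ k, 0 ≤ w k}

instance (K : ℕ) : Nonempty (Orth K) := ⟨⟨fun _ => 0, fun _ => le_rfl⟩⟩

/-- Euclidean inner product on `Fin K → ℝ`. -/
def ip {K : ℕ} (x y : Fin K → ℝ) : ℝ := ∑ k, x k * y k

/-- `F` is quasi-continuous at `x`: there is a sequence `xₙ → x` with `F xₙ → F x`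
and `F` continuous at every `xₙ`. -/
def QuasiContinuousAt {X Y : Type*} [MetricSpace X] [MetricSpace Y] (F : X → Y) (x : X) : Prop :=
  ∃ u : ℕ → X, Tendsto u atTop (nhds x) ∧
    Tendsto (fun n => F (u n)) atTop (nhds (F x)) ∧ ∀ n, ContinuousAt F (u n)

/-- `F` is quasi-continuous if it is quasi-continuous at every point. -/
def QuasiContinuous {X Y : Type*} [MetricSpace X] [MetricSpace Y] (F : X → Y) : Prop :=
  ∀ x, QuasiContinuousAt F x

/-- The cluster set `^xF` of `F` at `x`: all limits of `F` along sequences converging to `x`. -/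
def clusterSet {X Y : Type*} [MetricSpace X] [MetricSpace Y] (F : X → Y) (x : X) : Set Y :=
  {y | ∃ u : ℕ → X, Tendsto u atTop (nhds x) ∧ Tendsto (fun n => F (u n)) atTop (nhds y)}

/-- Componentwise positive part, landing in the nonnegative orthant. -/
def posPart {K : ℕ} (w : Fin K → ℝ) : Orth K := ⟨fun k => max (w k) 0, fun k => le_max_right _ _⟩

def addO {K : ℕ} (a b : Orth K) : Orth K :=
  ⟨fun k => a.1 k + b.1 k, fun k => add_nonneg (a.2 k) (b.2 k)⟩

/-- The finite-horizon workload map under scheduler `H`, on the list of arrivals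
`[a_1, …, a_t]` (`a_1` the most recent arrival):
`G_1(a_1) = a_1`, `G_t(a_1,…,a_t) = a_1 + [G_{t-1}(a_2,…,a_t) - H (G_{t-1}(a_2,…,a_t))]⁺`. -/
def GwcL {K : ℕ} (H : Orth K → Orth K) : List (Orth K) → Orth K
  | [] => ⟨fun _ => 0, fun _ => le_rfl⟩
  | [a] => a
  | a :: b :: rest =>
      addO a (posPart ((GwcL H (b :: rest)).1 - (H (GwcL H (b :: rest))).1))

/-- The simplex rate region `ℛ_s = {r ∈ ℝ₊^K : ∑_k r^k / C^k ≤ 1}`. -/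
def simplexRegion {K : ℕ} (C : Fin K → ℝ) : Set (Fin K → ℝ) :=
  {r | (∀ k, 0 ≤ r k) ∧ ∑ k, r k / C k ≤ 1}

/-- `H` is a work-conserving max-weight scheduler for rate region `R` with capacities `C`:
on `Π_k [0, C^k)` it is the (Euclidean) metric projection onto `R`, elsewhere it is a
max-weight choice. -/
def IsWCScheduler {K : ℕ} (R : Set (Fin K → ℝ)) (C : Fin K → ℝ) (H : Orth K → Orth K) : Prop :=
  ∀ w : Orth K,
    ((∀ k, w.1 k < C k) →
      ((H w).1 ∈ R ∧ ∀ r ∈ R, ∑ k, (w.1 k - (H w).1 k) ^ 2 ≤ ∑ k, (w.1 k - r k) ^ 2)) ∧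
    ((¬ ∀ k, w.1 k < C k) →
      ((H w).1 ∈ R ∧ ∀ r ∈ R, ip r w.1 ≤ ip (H w).1 w.1))

/-- The constraint set `𝔸(u, b)`: arrival paths of length `u` whose cluster set at the
horizon-`u` workload map contains `b` and whose intermediate workloads stay outside
`ℛ_s`. -/
def AA {K : ℕ} (Hwc : Orth K → Orth K) (C : Fin K → ℝ) (u : ℕ) (b : Orth K) :
    Set (Fin u → Orth K) :=
  {x | b ∈ clusterSet (fun y : Fin u → Orth K => GwcL Hwc (List.ofFn y)) x ∧
    ∀ v ∈ Finset.Icc 1 (u - 1), (GwcL Hwc ((List.ofFn x).drop v)).1 ∉ simplexRegion C}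

/-- `𝔸(u, b)` including the convention `𝔸(1, b) = {b}`. -/
def AAfull (Hwc : Orth 2 → Orth 2) (u : ℕ) (b : Orth 2) : Set (Fin u → Orth 2) :=
  if u = 1 then {x | ∀ i, x i = b} else AA Hwc (fun _ => 1) u b

/-- The finite-horizon rate function
`I_t(b) = min_{1≤u≤t} inf_{x ∈ 𝔸(u,b)} ∑_{i=1}^u ∑_{k=1}^2 Λ(x_i^k)`
(infimum over the empty set being `+∞`). -/
noncomputable def Irate (Hwc : Orth 2 → Orth 2) (Λ : ℝ → ℝ) (t : ℕ) (b : Orth 2) : ℝ≥0∞ :=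
  ⨅ u ∈ Finset.Icc 1 t, ⨅ x ∈ AAfull Hwc u b,
    ENNReal.ofReal (∑ i, (Λ ((x i).1 0) + Λ ((x i).1 1)))

/-- The target set `𝕏(u, b) = {b + v : v ∈ ℝ₊², v¹ + v² = u − 1}`. -/
def XX (u : ℕ) (b : Orth 2) : Set (Fin 2 → ℝ) :=
  {p | ∃ v : Fin 2 → ℝ, (∀ k, 0 ≤ v k) ∧ v 0 + v 1 = (u : ℝ) - 1 ∧
    p = fun k => b.1 k + v k}

/-- The direction `h`: `(1,0)` if `b¹ ≥ b²` and `(0,1)` otherwise. -/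
noncomputable def hvec (b : Orth 2) : Fin 2 → ℝ := if b.1 1 ≤ b.1 0 then ![1, 0] else ![0, 1]

/-!
Whatever a work-conserving scheduler does with ties, the total workload `w¹ + w²` follows the
scalar Lindley recursion `σ ↦ s + (σ - 1)⁺`, so it is a continuous function of the arrivals and
passes to cluster points. Along a path in `𝔸(u, b)` every intermediate workload lies outside
`ℛ_s`, i.e. has total above `1`, so the server never idles: the arrivals add up to a point of
`𝕏(u, b)` (componentwise at least `b` since service only removes work, with total
`b¹ + b² + u - 1`). Jensen in each coordinate, followed by the two-point majorization inequality
(the projection has the same coordinate sum and a smaller norm), gives (i). For (ii), arrivals at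
the constant rate `(b + (u - 1) h) / u` keep the queue `h` points to strictly ahead, so max-weight
serves only that queue and the workload ends exactly at `b`; if `b` is on the boundary of `ℛ_s`,
the one-step path `b` is cheaper still.
-/

theorem Fin.two_eq_or_eq_of_ne {i j : Fin 2} (hij : i ≠ j) (k : Fin 2) : k = i ∨ k = j := by
  omega

theorem Fin.sum_univ_two_of_ne {M : Type*} [AddCommMonoid M] {i j : Fin 2} (hij : i ≠ j)
    (f : Fin 2 → M) : ∑ k, f k = f i + f j := by
  fin_cases i <;> fin_cases j <;> simp_all [Fin.sum_univ_two, add_comm]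

theorem ConvexOn.add_le_add_of_mem_uIcc {s : Set ℝ} {f : ℝ → ℝ} (hf : ConvexOn ℝ s f)
    {x y p : ℝ} (hx : x ∈ s) (hy : y ∈ s) (hp : p ∈ Set.uIcc x y) :
    f p + f (x + y - p) ≤ f x + f y := by
  rw [← segment_eq_uIcc] at hp
  obtain ⟨a, c, ha, hc, hac, rfl⟩ := hp
  have hreflect : x + y - (a • x + c • y) = c • x + a • y := by
    simp only [smul_eq_mul]
    linear_combination (-(x + y)) * hac
  rw [hreflect]
  have h₁ := hf.2 hx hy ha hc hac
  have h₂ := hf.2 hx hy hc ha ((add_comm c a).trans hac)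
  simp only [smul_eq_mul] at h₁ h₂ ⊢
  calc _ ≤ (a * f x + c * f y) + (c * f x + a * f y) := add_le_add h₁ h₂
    _ = f x + f y := by linear_combination (f x + f y) * hac

theorem ConvexOn.add_le_add_of_sq_add_sq_le {s : Set ℝ} {f : ℝ → ℝ} (hf : ConvexOn ℝ s f)
    {p₀ p₁ q₀ q₁ : ℝ} (hq₀ : q₀ ∈ s) (hq₁ : q₁ ∈ s) (hsum : p₀ + p₁ = q₀ + q₁)
    (hsq : p₀ ^ 2 + p₁ ^ 2 ≤ q₀ ^ 2 + q₁ ^ 2) :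
    f p₀ + f p₁ ≤ f q₀ + f q₁ := by
  have hmul : (p₀ - q₀) * (p₀ - q₁) ≤ 0 := by
    have : p₁ = q₀ + q₁ - p₀ := by linarith
    subst this
    nlinarith
  have hp : p₀ ∈ Set.uIcc q₀ q₁ := by
    rcases le_total q₀ q₁ with h | h
    · rw [Set.uIcc_of_le h]
      constructor <;> nlinarith
    · rw [Set.uIcc_of_ge h]
      constructor <;> nlinarith
  simpa [show q₀ + q₁ - p₀ = p₁ by linarith] using hf.add_le_add_of_mem_uIcc hq₀ hq₁ hp

theorem ConvexOn.mul_map_div_le_sum {s : Set ℝ} {f : ℝ → ℝ} (hf : ConvexOn ℝ s f) {n : ℕ}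
    (hn : 0 < n) {g : Fin n → ℝ} (hg : ∀ i, g i ∈ s) :
    n * f ((∑ i, g i) / n) ≤ ∑ i, f (g i) := by
  have hn' : (0 : ℝ) < n := Nat.cast_pos.2 hn
  have hjensen := hf.map_sum_le (t := Finset.univ) (w := fun _ => (n : ℝ)⁻¹)
    (fun _ _ => by positivity) (by simp [hn'.ne']) fun i _ => hg i
  simp only [smul_eq_mul, ← div_eq_inv_mul, ← Finset.sum_div] at hjensen
  calc n * f ((∑ i, g i) / n) ≤ n * ((∑ i, f (g i)) / n) := by gcongr
    _ = ∑ i, f (g i) := by field_simp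

theorem mem_clusterSet_self {X Y : Type*} [MetricSpace X] [MetricSpace Y] (F : X → Y) (x : X) :
    F x ∈ clusterSet F x :=
  ⟨fun _ => x, tendsto_const_nhds, tendsto_const_nhds⟩

def workTotal (w : Orth 2) : ℝ := w.1 0 + w.1 1

theorem continuous_workTotal : Continuous workTotal :=
  ((continuous_apply 0).comp continuous_subtype_val).add
    ((continuous_apply 1).comp continuous_subtype_val)

theorem mem_simplexRegion_one_iff (r : Fin 2 → ℝ) :
    r ∈ simplexRegion (fun _ : Fin 2 => 1) ↔ (∀ k, 0 ≤ r k) ∧ r 0 + r 1 ≤ 1 := by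
  simp [simplexRegion, Fin.sum_univ_two]

theorem notMem_simplexRegion_iff (w : Orth 2) :
    w.1 ∉ simplexRegion (fun _ : Fin 2 => 1) ↔ 1 < workTotal w := by
  rw [mem_simplexRegion_one_iff, workTotal]
  simp [w.2]

theorem workTotal_eq_of_ne {i j : Fin 2} (hij : i ≠ j) (w : Orth 2) :
    workTotal w = w.1 i + w.1 j := by
  rw [workTotal, ← Fin.sum_univ_two (f := w.1), Fin.sum_univ_two_of_ne hij]

namespace IsWCScheduler

variable {H : Orth 2 → Orth 2}

theorem le_and_sum_eq_of_lt_one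
    (hH : IsWCScheduler (simplexRegion (fun _ : Fin 2 => 1)) (fun _ => 1) H) {w : Orth 2}
    (hw : ∀ k, w.1 k < 1) :
    (∀ k, (H w).1 k ≤ w.1 k) ∧ workTotal (H w) = min (workTotal w) 1 := by
  obtain ⟨hmem, hproj⟩ := (hH w).1 hw
  rw [mem_simplexRegion_one_iff] at hmem
  simp only [Fin.sum_univ_two] at hproj
  have := hmem.1 0; have := hmem.1 1; have := hw 0; have := hw 1
  rcases le_or_gt (w.1 0 + w.1 1) 1 with hle | hgt
  · have hdist := hproj w.1 ((mem_simplexRegion_one_iff _).2 ⟨w.2, hle⟩)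
    have h0 : (H w).1 0 = w.1 0 := by
      nlinarith [sq_nonneg (w.1 0 - (H w).1 0), sq_nonneg (w.1 1 - (H w).1 1)]
    have h1 : (H w).1 1 = w.1 1 := by
      nlinarith [sq_nonneg (w.1 0 - (H w).1 0), sq_nonneg (w.1 1 - (H w).1 1)]
    refine ⟨fun k => ?_, by rw [workTotal, workTotal, h0, h1, min_eq_left hle]⟩
    fin_cases k <;> simp [h0, h1]
  · -- the projection of `w` onto the face `r¹ + r² = 1` moves both coordinates down by `δ`
    set δ := (w.1 0 + w.1 1 - 1) / 2 with hδ
    have hdist := hproj (fun k => w.1 k - δ) ((mem_simplexRegion_one_iff _).2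
      ⟨fun k => by fin_cases k <;> simp [hδ] <;> linarith, by simp only [hδ]; linarith⟩)
    simp only [sub_sub_cancel] at hdist
    have hsq : (w.1 0 - (H w).1 0 - δ) ^ 2 + (w.1 1 - (H w).1 1 - δ) ^ 2 ≤ 0 := by
      nlinarith [mul_nonneg (by linarith : 0 ≤ δ)
        (by linarith : 0 ≤ (w.1 0 - (H w).1 0) + (w.1 1 - (H w).1 1) - 2 * δ)]
    have h0 : (H w).1 0 = w.1 0 - δ := by
      nlinarith [sq_nonneg (w.1 0 - (H w).1 0 - δ), sq_nonneg (w.1 1 - (H w).1 1 - δ)]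
    have h1 : (H w).1 1 = w.1 1 - δ := by
      nlinarith [sq_nonneg (w.1 0 - (H w).1 0 - δ), sq_nonneg (w.1 1 - (H w).1 1 - δ)]
    refine ⟨fun k => ?_, by rw [workTotal, workTotal, h0, h1, min_eq_right hgt.le, hδ]; ring⟩
    fin_cases k <;> simp [h0, h1, hδ] <;> linarith

theorem sum_eq_one_of_one_le
    (hH : IsWCScheduler (simplexRegion (fun _ : Fin 2 => 1)) (fun _ => 1) H) {w : Orth 2}
    {i j : Fin 2} (hij : i ≠ j) (hi : 1 ≤ w.1 i) (hji : w.1 j ≤ w.1 i) :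
    (H w).1 i + (H w).1 j = 1 ∧ (H w).1 j * (w.1 i - w.1 j) = 0 := by
  obtain ⟨hmem, hmax⟩ := (hH w).2 fun h => (h i).not_ge hi
  have hsingle : ip (Pi.single i 1) w.1 ≤ ip (H w).1 w.1 :=
    hmax _ ((mem_simplexRegion_one_iff _).2 ⟨fun k => by
      by_cases hk : k = i <;> simp [hk], by fin_cases i <;> simp⟩)
  rw [mem_simplexRegion_one_iff, ← Fin.sum_univ_two (f := fun k => (H w).1 k),
    Fin.sum_univ_two_of_ne hij] at hmem
  simp only [ip, Fin.sum_univ_two_of_ne hij, Pi.single_eq_same, Pi.single_eq_of_ne' hij,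
    one_mul, zero_mul, add_zero] at hsingle
  constructor <;> nlinarith [hmem.1 i, hmem.1 j]

theorem apply_eq_single
    (hH : IsWCScheduler (simplexRegion (fun _ : Fin 2 => 1)) (fun _ => 1) H) {w : Orth 2}
    {i j : Fin 2} (hij : i ≠ j) (hi : 1 ≤ w.1 i) (hji : w.1 j < w.1 i) :
    (H w).1 i = 1 ∧ (H w).1 j = 0 := by
  obtain ⟨hsum, hzero⟩ := hH.sum_eq_one_of_one_le hij hi hji.le
  have hj : (H w).1 j = 0 := (mul_eq_zero.1 hzero).resolve_right (sub_ne_zero.2 hji.ne')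
  exact ⟨by linarith, hj⟩

theorem le_and_sum_eq
    (hH : IsWCScheduler (simplexRegion (fun _ : Fin 2 => 1)) (fun _ => 1) H) (w : Orth 2) :
    (∀ k, (H w).1 k ≤ w.1 k) ∧ workTotal (H w) = min (workTotal w) 1 := by
  by_cases hw : ∀ k, w.1 k < 1
  · exact hH.le_and_sum_eq_of_lt_one hw
  obtain ⟨i, j, hij, hi, hji⟩ : ∃ i j : Fin 2, i ≠ j ∧ 1 ≤ w.1 i ∧ w.1 j ≤ w.1 i := by
    push Not at hw
    obtain ⟨k, hk⟩ := hw
    rcases le_total (w.1 1) (w.1 0) with h | h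
    · exact ⟨0, 1, by decide, hk.trans (by fin_cases k <;> simp [h]), h⟩
    · exact ⟨1, 0, by decide, hk.trans (by fin_cases k <;> simp [h]), h⟩
  obtain ⟨hsum, hzero⟩ := hH.sum_eq_one_of_one_le hij hi hji
  have := (H w).2 i; have := (H w).2 j; have := w.2 j
  have hj : (H w).1 j ≤ w.1 j := by
    rcases le_or_gt 1 (w.1 j) with h | h
    · linarith
    · nlinarith
  refine ⟨fun k => ?_, ?_⟩
  · rcases Fin.two_eq_or_eq_of_ne hij k with rfl | rfl
    · linarith
    · exact hj
  · rw [workTotal_eq_of_ne hij, workTotal_eq_of_ne hij, hsum, min_eq_right]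
    linarith

theorem workTotal_posPart_sub
    (hH : IsWCScheduler (simplexRegion (fun _ : Fin 2 => 1)) (fun _ => 1) H) (w : Orth 2) :
    workTotal (_root_.posPart (w.1 - (H w).1)) = max (workTotal w - 1) 0 := by
  obtain ⟨hle, hsum⟩ := hH.le_and_sum_eq w
  have hserved : workTotal (_root_.posPart (w.1 - (H w).1)) = workTotal w - workTotal (H w) := by
    simp only [workTotal, _root_.posPart, Pi.sub_apply, max_eq_left (sub_nonneg.2 (hle _))]
    ring
  rw [hserved, hsum]
  rcases le_total (workTotal w) 1 with h | h
  · rw [min_eq_left h, max_eq_right (by linarith)]; ring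
  · rw [min_eq_right h, max_eq_left (by linarith)]

end IsWCScheduler

def lindley : List ℝ → ℝ
  | [] => 0
  | s :: r => s + max (lindley r - 1) 0

theorem continuous_lindley_ofFn (n : ℕ) :
    Continuous fun g : Fin n → ℝ => lindley (List.ofFn g) := by
  induction n with
  | zero => exact continuous_const
  | succ n ih =>
    simp only [List.ofFn_succ, lindley]
    exact (continuous_apply 0).add
      (((ih.comp (continuous_pi fun i => continuous_apply i.succ)).sub continuous_const).max
        continuous_const)

theorem lindley_eq_sum_sub (l : List ℝ) (hl : l ≠ [])
    (hbusy : ∀ v, 1 ≤ v → v < l.length → 1 < lindley (l.drop v)) :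
    lindley l = l.sum - ((l.length : ℝ) - 1) := by
  induction l with
  | nil => exact absurd rfl hl
  | cons s r ih =>
    rcases eq_or_ne r [] with rfl | hr
    · simp [lindley]
    have hr1 : 1 < lindley r := hbusy 1 le_rfl (by simpa using List.length_pos_of_ne_nil hr)
    have hrec := ih hr fun v hv hvr => hbusy (v + 1) (by omega) (by simpa using hvr)
    rw [lindley, max_eq_left (by linarith), hrec]
    simp only [List.sum_cons, List.length_cons, Nat.cast_succ]
    ring

theorem GwcL_cons {K : ℕ} (H : Orth K → Orth K) (a : Orth K) {l : List (Orth K)} (hl : l ≠ []) :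
    GwcL H (a :: l) = addO a (_root_.posPart ((GwcL H l).1 - (H (GwcL H l)).1)) := by
  obtain ⟨b, rest, rfl⟩ := List.exists_cons_of_ne_nil hl
  rfl

theorem GwcL_le_sum {K : ℕ} (H : Orth K → Orth K) (l : List (Orth K)) (k : Fin K) :
    (GwcL H l).1 k ≤ (l.map fun a => a.1 k).sum := by
  induction l with
  | nil => simp [GwcL]
  | cons a r ih =>
    rcases eq_or_ne r [] with rfl | hr
    · simp [GwcL]
    rw [GwcL_cons H a hr, List.map_cons, List.sum_cons]
    have hserved : max ((GwcL H r).1 k - (H (GwcL H r)).1 k) 0 ≤ (GwcL H r).1 k :=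
      max_le (sub_le_self _ ((H _).2 k)) ((GwcL H r).2 k)
    simp only [addO, _root_.posPart, Pi.sub_apply]
    linarith

theorem workTotal_GwcL {H : Orth 2 → Orth 2}
    (hH : IsWCScheduler (simplexRegion (fun _ : Fin 2 => 1)) (fun _ => 1) H) (l : List (Orth 2)) :
    workTotal (GwcL H l) = lindley (l.map workTotal) := by
  induction l with
  | nil => simp [workTotal, GwcL, lindley]
  | cons a r ih =>
    rcases eq_or_ne r [] with rfl | hr
    · simp [GwcL, lindley]
    rw [GwcL_cons H a hr, List.map_cons, lindley, ← ih, ← hH.workTotal_posPart_sub]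
    simp only [workTotal, addO]
    ring

theorem sum_mem_XX_of_mem_AA {H : Orth 2 → Orth 2}
    (hH : IsWCScheduler (simplexRegion (fun _ : Fin 2 => 1)) (fun _ => 1) H)
    {u : ℕ} (hu : 1 ≤ u) {b : Orth 2} {x : Fin u → Orth 2} (hx : x ∈ AA H (fun _ => 1) u b) :
    (fun k => ∑ i, (x i).1 k) ∈ XX u b := by
  obtain ⟨⟨y, hy, hGy⟩, hbusy⟩ := hx
  have hcomp (k : Fin 2) : b.1 k ≤ ∑ i, (x i).1 k := by
    have hk : Continuous fun w : Orth 2 => w.1 k := (continuous_apply k).comp continuous_subtype_val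
    refine le_of_tendsto_of_tendsto' ((hk.tendsto b).comp hGy)
      (((continuous_finsetSum _ fun i _ => hk.comp (continuous_apply i)).tendsto x).comp hy)
      fun n => ?_
    simpa [List.map_ofFn, List.sum_ofFn] using GwcL_le_sum H (List.ofFn (y n)) k
  have hcont : Continuous fun z : Fin u → Orth 2 => lindley (List.ofFn fun i => workTotal (z i)) :=
    (continuous_lindley_ofFn u).comp
      (continuous_pi fun i => continuous_workTotal.comp (continuous_apply i))
  have htotal : workTotal b = lindley (List.ofFn fun i => workTotal (x i)) := by
    refine tendsto_nhds_unique ((continuous_workTotal.tendsto b).comp hGy) ?_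
    simpa [Function.comp_def, workTotal_GwcL hH, List.map_ofFn] using (hcont.tendsto x).comp hy
  have hunroll : lindley (List.ofFn fun i => workTotal (x i)) = ∑ i, workTotal (x i) - (u - 1) := by
    refine (lindley_eq_sum_sub _ (by simp; omega) fun v hv hvu => ?_).trans
      (by simp [List.sum_ofFn])
    have := (notMem_simplexRegion_iff _).1 (hbusy v (Finset.mem_Icc.2 ⟨hv, by simp at hvu; omega⟩))
    rwa [workTotal_GwcL hH, List.map_drop, List.map_ofFn] at this
  refine ⟨fun k => ∑ i, (x i).1 k - b.1 k, fun k => sub_nonneg.2 (hcomp k), ?_, by funext k; ring⟩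
  simp only [workTotal, Finset.sum_add_distrib] at htotal hunroll
  linarith

theorem GwcL_replicate {H : Orth 2 → Orth 2}
    (hH : IsWCScheduler (simplexRegion (fun _ : Fin 2 => 1)) (fun _ => 1) H)
    {a : Orth 2} {i j : Fin 2} (hij : i ≠ j) (hai : 1 ≤ a.1 i) {n : ℕ} (hn : 1 ≤ n)
    (hgap : 0 < ((n : ℝ) - 1) * (a.1 i - a.1 j - 1) + 1) :
    (GwcL H (List.replicate n a)).1 i = n * a.1 i - (n - 1) ∧
      (GwcL H (List.replicate n a)).1 j = n * a.1 j := by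
  induction n, hn using Nat.le_induction with
  | base => simp [GwcL]
  | succ m hm ih =>
    have hm' : (1 : ℝ) ≤ m := Nat.one_le_cast.2 hm
    push_cast at hgap
    obtain ⟨hGi, hGj⟩ := ih (by rcases le_or_gt 0 (a.1 i - a.1 j - 1) with h | h <;> nlinarith)
    have hHi : 1 ≤ (GwcL H (List.replicate m a)).1 i := by rw [hGi]; nlinarith
    obtain ⟨hSi, hSj⟩ := hH.apply_eq_single hij hHi (by rw [hGi, hGj]; linarith)
    have := a.2 j
    rw [List.replicate_succ, GwcL_cons H a (by simp; omega)]
    simp only [addO, _root_.posPart, Pi.sub_apply, hGi, hGj, hSi, hSj]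
    push_cast
    constructor
    · rw [max_eq_left (by nlinarith)]; ring
    · rw [max_eq_left (by nlinarith)]; ring

theorem hvec_eq_single (b : Orth 2) :
    ∃ i j : Fin 2, i ≠ j ∧ b.1 j ≤ b.1 i ∧ hvec b = Pi.single i 1 := by
  unfold hvec
  split_ifs with h
  · exact ⟨0, 1, by decide, h, by ext k; fin_cases k <;> simp⟩
  · exact ⟨1, 0, by decide, (not_le.1 h).le, by ext k; fin_cases k <;> simp⟩

/-- `u` arrivals at this rate add up to `b + (u - 1) h`, and the `u - 1` services spent on the
queue `h` points to leave exactly `b`. -/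
noncomputable def linearArrival (u : ℕ) (b : Orth 2) : Orth 2 :=
  ⟨fun k => (b.1 k + ((u : ℝ) - 1) * hvec b k) / u, fun k => by
    rcases Nat.eq_zero_or_pos u with rfl | hu
    · simp
    obtain ⟨i, -, -, -, hh⟩ := hvec_eq_single b
    have : 0 ≤ hvec b k := by rw [hh]; by_cases hk : k = i <;> simp [hk]
    have := b.2 k
    have : (1 : ℝ) ≤ u := Nat.one_le_cast.2 hu
    positivity⟩

theorem one_le_of_not_lt_one {b : Orth 2} (hb : ¬ (b.1 0 < 1 ∧ b.1 1 < 1)) {i j : Fin 2}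
    (hij : i ≠ j) (hji : b.1 j ≤ b.1 i) : 1 ≤ b.1 i := by
  by_contra! h
  exact hb ⟨by rcases Fin.two_eq_or_eq_of_ne hij 0 with h0 | h0 <;> rw [h0] <;> linarith,
    by rcases Fin.two_eq_or_eq_of_ne hij 1 with h1 | h1 <;> rw [h1] <;> linarith⟩

theorem linearArrival_apply {u : ℕ} {b : Orth 2} {i j : Fin 2} (hij : i ≠ j)
    (hh : hvec b = Pi.single i 1) :
    (linearArrival u b).1 i = (b.1 i + (u - 1)) / u ∧ (linearArrival u b).1 j = b.1 j / u := by
  simp [linearArrival, hh, hij.symm]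

theorem GwcL_replicate_linearArrival {H : Orth 2 → Orth 2}
    (hH : IsWCScheduler (simplexRegion (fun _ : Fin 2 => 1)) (fun _ => 1) H)
    {u : ℕ} {b : Orth 2} {i j : Fin 2} (hij : i ≠ j) (hbi : 1 ≤ b.1 i) (hji : b.1 j ≤ b.1 i)
    (hh : hvec b = Pi.single i 1) {n : ℕ} (hn : 1 ≤ n) (hnu : n ≤ u) :
    (GwcL H (List.replicate n (linearArrival u b))).1 i = n * (linearArrival u b).1 i - (n - 1) ∧
      (GwcL H (List.replicate n (linearArrival u b))).1 j = n * (linearArrival u b).1 j := by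
  obtain ⟨hai, haj⟩ := linearArrival_apply (u := u) hij hh
  have hn' : (1 : ℝ) ≤ n := Nat.one_le_cast.2 hn
  have hnu' : (n : ℝ) ≤ u := Nat.cast_le.2 hnu
  have hu : (1 : ℝ) ≤ u := hn'.trans hnu'
  refine GwcL_replicate hH hij ?_ hn ?_
  · rw [hai, le_div_iff₀ (by positivity)]
    linarith
  · -- the lead of queue `i` shrinks by at most `1 / u` per step
    have hpos : 0 < (((n : ℝ) - 1) * (b.1 i - b.1 j) + (u - (n - 1))) / u := by
      have := sub_nonneg.2 hji
      apply div_pos _ (by positivity)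
      nlinarith
    convert hpos using 1
    rw [hai, haj]
    field_simp
    ring

theorem const_linearArrival_mem_AA {H : Orth 2 → Orth 2}
    (hH : IsWCScheduler (simplexRegion (fun _ : Fin 2 => 1)) (fun _ => 1) H)
    {u : ℕ} (hu : 1 ≤ u) {b : Orth 2} (hb : ¬ (b.1 0 < 1 ∧ b.1 1 < 1)) (hbt : 1 < workTotal b) :
    (fun _ : Fin u => linearArrival u b) ∈ AA H (fun _ => 1) u b := by
  obtain ⟨i, j, hij, hji, hh⟩ := hvec_eq_single b
  have hbi := one_le_of_not_lt_one hb hij hji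
  obtain ⟨hai, haj⟩ := linearArrival_apply (u := u) hij hh
  have hofn : List.ofFn (fun _ : Fin u => linearArrival u b) =
      List.replicate u (linearArrival u b) := List.ofFn_const u _
  refine ⟨?_, fun v hv => ?_⟩
  · convert mem_clusterSet_self (fun y : Fin u → Orth 2 => GwcL H (List.ofFn y)) _
    obtain ⟨hGi, hGj⟩ := GwcL_replicate_linearArrival hH hij hbi hji hh hu le_rfl
    refine Subtype.ext (funext fun k => ?_)
    rcases Fin.two_eq_or_eq_of_ne hij k with rfl | rfl
    · rw [hofn, hGi, hai]; field_simp; ring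
    · rw [hofn, hGj, haj]; field_simp
  · rw [Finset.mem_Icc] at hv
    rw [hofn, List.drop_replicate, notMem_simplexRegion_iff, workTotal_eq_of_ne hij]
    obtain ⟨hGi, hGj⟩ :=
      GwcL_replicate_linearArrival (u := u) (n := u - v) hH hij hbi hji hh (by omega) (by omega)
    rw [hGi, hGj]
    have hn : (1 : ℝ) ≤ (u - v : ℕ) := Nat.one_le_cast.2 (by omega)
    have : 1 < (linearArrival u b).1 i + (linearArrival u b).1 j := by
      rw [hai, haj, ← add_div, lt_div_iff₀ (by positivity)]
      linarith [workTotal_eq_of_ne hij b ▸ hbt]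
    nlinarith

theorem linearArrival_eq_self {u : ℕ} (hu : 1 ≤ u) {b : Orth 2}
    (hb : ¬ (b.1 0 < 1 ∧ b.1 1 < 1)) (hbt : workTotal b ≤ 1 ∨ u = 1) :
    linearArrival u b = b := by
  obtain ⟨i, j, hij, hji, hh⟩ := hvec_eq_single b
  have hbi := one_le_of_not_lt_one hb hij hji
  obtain ⟨hai, haj⟩ := linearArrival_apply (u := u) hij hh
  rw [workTotal_eq_of_ne hij] at hbt
  have := b.2 j
  refine Subtype.ext (funext fun k => ?_)
  rcases Fin.two_eq_or_eq_of_ne hij k with rfl | rfl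
  · rcases hbt with hbt | rfl
    · rw [hai, show b.1 k = 1 by linarith]; field_simp; ring
    · simp [hai]
  · rcases hbt with hbt | rfl
    · rw [haj, show b.1 k = 0 by linarith, zero_div]
    · simp [haj]

section RateFunction

variable {H : Orth 2 → Orth 2} {Λ : ℝ → ℝ} {t : ℕ} {b : Orth 2}

theorem Irate_le_of_mem {u : ℕ} (hu : u ∈ Finset.Icc 1 t) {x : Fin u → Orth 2}
    (hx : x ∈ AAfull H u b) :
    Irate H Λ t b ≤ ENNReal.ofReal (∑ i, (Λ ((x i).1 0) + Λ ((x i).1 1))) :=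
  (iInf₂_le u hu).trans (iInf₂_le x hx)

theorem Irate_le_linearArrival
    (hH : IsWCScheduler (simplexRegion (fun _ : Fin 2 => 1)) (fun _ => 1) H)
    (hΛ0 : ∀ x : ℝ, 0 ≤ x → 0 ≤ Λ x) {u : ℕ} (hu : u ∈ Finset.Icc 1 t)
    (hb : ¬ (b.1 0 < 1 ∧ b.1 1 < 1)) :
    Irate H Λ t b ≤ ENNReal.ofReal
      (u * (Λ ((linearArrival u b).1 0) + Λ ((linearArrival u b).1 1))) := by
  obtain ⟨hu1, hut⟩ := Finset.mem_Icc.1 hu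
  by_cases hbt : workTotal b ≤ 1 ∨ u = 1
  · -- here the straight path is `b` itself, so the one-step path `x₁ = b` is cheaper
    have hself : Irate H Λ t b ≤ ENNReal.ofReal (Λ (b.1 0) + Λ (b.1 1)) := by
      simpa using Irate_le_of_mem (Finset.mem_Icc.2 ⟨le_rfl, hu1.trans hut⟩)
        (x := fun _ : Fin 1 => b) (by simp [AAfull])
    rw [linearArrival_eq_self hu1 hb hbt]
    refine hself.trans (ENNReal.ofReal_le_ofReal (le_mul_of_one_le_left ?_ (by exact_mod_cast hu1)))
    exact add_nonneg (hΛ0 _ (b.2 0)) (hΛ0 _ (b.2 1))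
  · push Not at hbt
    have hmem : (fun _ : Fin u => linearArrival u b) ∈ AAfull H u b := by
      rw [AAfull, if_neg hbt.2]
      exact const_linearArrival_mem_AA hH hu1 hb hbt.1
    simpa only [Finset.sum_const, Finset.card_univ, Fintype.card_fin, nsmul_eq_mul]
      using Irate_le_of_mem (Λ := Λ) hu hmem

theorem add_eq_of_mem_XX {u : ℕ} {q : Fin 2 → ℝ} (hq : q ∈ XX u b) :
    q 0 + q 1 = b.1 0 + b.1 1 + (u - 1) := by
  obtain ⟨v, -, hv, rfl⟩ := hq
  linarith

theorem sum_mem_XX_of_mem_AAfull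
    (hH : IsWCScheduler (simplexRegion (fun _ : Fin 2 => 1)) (fun _ => 1) H)
    {u : ℕ} (hu : 1 ≤ u) {x : Fin u → Orth 2} (hx : x ∈ AAfull H u b) :
    (fun k => ∑ i, (x i).1 k) ∈ XX u b := by
  unfold AAfull at hx
  split_ifs at hx with hu1
  · subst hu1
    exact ⟨0, fun _ => le_rfl, by simp, by simp [hx 0]⟩
  · exact sum_mem_XX_of_mem_AA hH hu hx

theorem mul_add_map_div_le_sum_of_mem_AAfull
    (hH : IsWCScheduler (simplexRegion (fun _ : Fin 2 => 1)) (fun _ => 1) H)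
    (hΛ : ConvexOn ℝ (Set.Ici 0) Λ) {u : ℕ} (hu : 1 ≤ u) {p : Fin 2 → ℝ} (hp : p ∈ XX u b)
    (hpmin : ∀ q ∈ XX u b, p 0 ^ 2 + p 1 ^ 2 ≤ q 0 ^ 2 + q 1 ^ 2)
    {x : Fin u → Orth 2} (hx : x ∈ AAfull H u b) :
    u * (Λ (p 0 / u) + Λ (p 1 / u)) ≤ ∑ i, (Λ ((x i).1 0) + Λ ((x i).1 1)) := by
  set s : Fin 2 → ℝ := fun k => ∑ i, (x i).1 k
  have hs : s ∈ XX u b := sum_mem_XX_of_mem_AAfull hH hu hx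
  have hs_nonneg (k : Fin 2) : s k / u ∈ Set.Ici 0 :=
    div_nonneg (Finset.sum_nonneg fun i _ => (x i).2 k) (Nat.cast_nonneg u)
  have hmajor : Λ (p 0 / u) + Λ (p 1 / u) ≤ Λ (s 0 / u) + Λ (s 1 / u) := by
    refine hΛ.add_le_add_of_sq_add_sq_le (hs_nonneg 0) (hs_nonneg 1) ?_ ?_
    · rw [← add_div, ← add_div, add_eq_of_mem_XX hp, add_eq_of_mem_XX hs]
    · simp only [div_pow, ← add_div]
      exact div_le_div_of_nonneg_right (hpmin s hs) (by positivity)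
  calc (u : ℝ) * (Λ (p 0 / u) + Λ (p 1 / u))
      ≤ u * Λ (s 0 / u) + u * Λ (s 1 / u) := by
        rw [← mul_add]; gcongr
    _ ≤ ∑ i, Λ ((x i).1 0) + ∑ i, Λ ((x i).1 1) :=
        add_le_add (hΛ.mul_map_div_le_sum hu fun i => (x i).2 0)
          (hΛ.mul_map_div_le_sum hu fun i => (x i).2 1)
    _ = ∑ i, (Λ ((x i).1 0) + Λ ((x i).1 1)) := Finset.sum_add_distrib.symm

end RateFunction

theorem finite_horizon_rate_function_bounds_K2_general
    (Hwc : Orth 2 → Orth 2)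
    (hwc : IsWCScheduler (simplexRegion (fun _ : Fin 2 => 1)) (fun _ => 1) Hwc)
    (Λ : ℝ → ℝ) (hΛconv : ConvexOn ℝ (Set.Ici 0) Λ) (hΛ0 : ∀ x : ℝ, 0 ≤ x → 0 ≤ Λ x)
    (t : ℕ) (b : Orth 2) :
    (∀ proj : ℕ → Fin 2 → ℝ,
      (∀ u ∈ Finset.Icc 1 t, proj u ∈ XX u b ∧
        ∀ q ∈ XX u b, (proj u 0) ^ 2 + (proj u 1) ^ 2 ≤ q 0 ^ 2 + q 1 ^ 2) →
      (⨅ u ∈ Finset.Icc 1 t,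
          ENNReal.ofReal ((u : ℝ) * (Λ (proj u 0 / u) + Λ (proj u 1 / u))))
        ≤ Irate Hwc Λ t b) ∧
    (¬ (b.1 0 < 1 ∧ b.1 1 < 1) →
      Irate Hwc Λ t b ≤
        ⨅ u ∈ Finset.Icc 1 t,
          ENNReal.ofReal ((u : ℝ) *
            (Λ ((b.1 0 + ((u : ℝ) - 1) * hvec b 0) / u)
              + Λ ((b.1 1 + ((u : ℝ) - 1) * hvec b 1) / u)))) := by
  refine ⟨fun proj hproj => ?_, fun hb => le_iInf₂ fun u hu => Irate_le_linearArrival hwc hΛ0 hu hb⟩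
  refine le_iInf₂ fun u hu => le_iInf₂ fun x hx => (iInf₂_le u hu).trans ?_
  obtain ⟨hp, hpmin⟩ := hproj u hu
  exact ENNReal.ofReal_le_ofReal
    (mul_add_map_div_le_sum_of_mem_AAfull hwc hΛconv (Finset.mem_Icc.1 hu).1 hp hpmin hx)

/-- Bounds on the finite-horizon rate function for `K = 2` with unit
capacities: (i) lower bound via the Euclidean projection of the origin onto `𝕏(u,b)`;
(ii) upper bound via constant-speed linear paths, when `b ∉ [0,1)²`. -/
theorem finite_horizon_rate_function_bounds_K2
    (Hwc : Orth 2 → Orth 2)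
    (hwc : IsWCScheduler (simplexRegion (fun _ : Fin 2 => 1)) (fun _ => 1) Hwc)
    (hqc : QuasiContinuous Hwc)
    (Λ : ℝ → ℝ) (hΛconv : ConvexOn ℝ (Set.Ici 0) Λ) (hΛ0 : ∀ x : ℝ, 0 ≤ x → 0 ≤ Λ x)
    (t : ℕ) (ht : 1 ≤ t) (b : Orth 2) :
    (∀ proj : ℕ → Fin 2 → ℝ,
      (∀ u ∈ Finset.Icc 1 t, proj u ∈ XX u b ∧
        ∀ q ∈ XX u b, (proj u 0) ^ 2 + (proj u 1) ^ 2 ≤ q 0 ^ 2 + q 1 ^ 2) →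
      (⨅ u ∈ Finset.Icc 1 t,
          ENNReal.ofReal ((u : ℝ) * (Λ (proj u 0 / u) + Λ (proj u 1 / u))))
        ≤ Irate Hwc Λ t b) ∧
    (¬ (b.1 0 < 1 ∧ b.1 1 < 1) →
      Irate Hwc Λ t b ≤
        ⨅ u ∈ Finset.Icc 1 t,
          ENNReal.ofReal ((u : ℝ) *
            (Λ ((b.1 0 + ((u : ℝ) - 1) * hvec b 0) / u)
              + Λ ((b.1 1 + ((u : ℝ) - 1) * hvec b 1) / u)))) :=
  finite_horizon_rate_function_bounds_K2_general Hwc hwc Λ hΛconv hΛ0 t b
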